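/- arXiv:1805.02062 — 2 statements merged into one kernel-verified Lean document; each statement's English description precedes it below -/
import Mathlib

section
/- Let (a_s)_{s ∈ S} be a countable family in L²(ℝ³, ℂ) forming a Parseval tight frame, i.e. ‖f‖²_{L²} = Σ_{s ∈ S} |⟨f, a_s⟩_{L²}|² for every f ∈ L²(ℝ³, ℂ). For a ∈ {1,2,3} define τ_a(ξ) = e_a × (ξ/|ξ|) and the vector-valued family A_s^a(ξ) = a_s(ξ) τ_a(ξ). Then for every U ∈ L²(ℝ³, ℂ³) with ξ₁U₁(ξ) + ξ₂U₂(ξ) + ξ₃U₃(ξ) = 0 for a.e. ξ, one has ‖U‖²_{L²} = Σ_{a=1}^{3} Σ_{s ∈ S} |⟨U, A_s^a⟩_{L²}|², i.e. the three Hedgehog copies of the scalar frame form a Parseval tight frame for the tangential fields in ℝ³. -/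
/-!
At each frequency `ξ ≠ 0` the vectors `τ_c(ξ)` form a Parseval frame of the plane `ξ^⊥`:
`⟪τ_c(ξ), v⟫ = (n × v)_c` with `n = ξ/|ξ|`, and `|n × v|² = |v|²` when `n · v = 0`.
Hence `G_c(ξ) := ⟪τ_c(ξ), U(ξ)⟫` defines three `L²` functions with `Σ_c ‖G_c‖² = ‖U‖²`,
and `⟪U, a_s τ_c⟫ = ⟪G_c, a_s⟫`, so the scalar frame identity applied to each `G_c` finishes.
-/

open MeasureTheory ComplexConjugate
open scoped InnerProductSpace

/-- The Hedgehog frame vector `τ_a(ξ) = e_a × (ξ/|ξ|)`, viewed as a complex vector. -/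
noncomputable def tauC (a : Fin 3) (ξ : EuclideanSpace ℝ (Fin 3)) :
    EuclideanSpace ℂ (Fin 3) :=
  (WithLp.equiv 2 (Fin 3 → ℂ)).symm
    fun i => ((crossProduct (Pi.single a 1) (fun j => ξ j / ‖ξ‖)) i : ℂ)

namespace MeasureTheory

variable {α 𝕜 E F : Type*} [MeasurableSpace α] {μ : Measure α} [RCLike 𝕜]

lemma L2.norm_sq_eq_integral_norm_sq [NormedAddCommGroup E] (f : Lp E 2 μ) :
    ‖f‖ ^ 2 = ∫ x, ‖f x‖ ^ 2 ∂μ := by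
  rw [Lp.norm_def, (Lp.memLp f).eLpNorm_eq_integral_rpow_norm two_ne_zero ENNReal.ofNat_ne_top,
    ENNReal.toReal_ofReal (by positivity)]
  simpa using Real.rpow_inv_natCast_pow (integral_nonneg fun _ => by positivity) two_ne_zero

lemma L2.sum_norm_sq_eq_of_ae [NormedAddCommGroup E] [NormedAddCommGroup F] {ι : Type*}
    [Fintype ι] (G : ι → Lp F 2 μ) (f : Lp E 2 μ)
    (h : ∀ᵐ x ∂μ, ∑ i, ‖G i x‖ ^ 2 = ‖f x‖ ^ 2) :
    ∑ i, ‖G i‖ ^ 2 = ‖f‖ ^ 2 := by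
  simp_rw [L2.norm_sq_eq_integral_norm_sq]
  rw [← integral_finsetSum _ fun i _ => (Lp.memLp (G i)).integrable_norm_pow two_ne_zero]
  exact integral_congr_ae h

variable [NormedAddCommGroup E] [InnerProductSpace 𝕜 E]

lemma MemLp.inner_of_norm_le_left {p : ENNReal} {τ : α → E} (hτ : AEStronglyMeasurable τ μ)
    {C : ℝ} (hC : ∀ᵐ x ∂μ, ‖τ x‖ ≤ C) {f : α → E} (hf : MemLp f p μ) :
    MemLp (fun x => ⟪τ x, f x⟫_𝕜) p μ := by
  refine hf.of_le_mul (c := C) (hτ.inner hf.1) ?_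
  filter_upwards [hC] with x hx
  exact (norm_inner_le_norm _ _).trans (mul_le_mul_of_nonneg_right hx (norm_nonneg _))

lemma L2.inner_eq_of_ae_eq_smul {τ : α → E} {f F : Lp E 2 μ} {φ g : Lp 𝕜 2 μ}
    (hF : F =ᵐ[μ] fun x => φ x • τ x) (hg : g =ᵐ[μ] fun x => ⟪τ x, f x⟫_𝕜) :
    ⟪f, F⟫_𝕜 = ⟪g, φ⟫_𝕜 := by
  rw [L2.inner_def, L2.inner_def]
  refine integral_congr_ae ?_
  filter_upwards [hF, hg] with x hFx hgx
  rw [hFx, hgx, inner_smul_right, RCLike.inner_apply', inner_conj_symm, mul_comm]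

end MeasureTheory

lemma tauC_apply (a : Fin 3) (ξ : EuclideanSpace ℝ (Fin 3)) (i : Fin 3) :
    tauC a ξ i = ((crossProduct (Pi.single a 1) (fun j => ξ j / ‖ξ‖)) i : ℂ) := rfl

lemma measurable_tauC (a : Fin 3) : Measurable (tauC a) := by
  unfold tauC
  simp only [WithLp.equiv_symm_apply]
  fun_prop

lemma EuclideanSpace.sum_sq_div_norm {ι : Type*} [Fintype ι] (ξ : EuclideanSpace ℝ ι) :
    ∑ j, (ξ j / ‖ξ‖) ^ 2 = ‖ξ‖ ^ 2 / ‖ξ‖ ^ 2 := by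
  simp_rw [div_pow, ← Finset.sum_div]
  congr 1
  simp [EuclideanSpace.norm_sq_eq]

lemma norm_tauC_le_one (a : Fin 3) (ξ : EuclideanSpace ℝ (Fin 3)) : ‖tauC a ξ‖ ≤ 1 := by
  have h := (EuclideanSpace.sum_sq_div_norm ξ).trans_le (div_self_le_one _)
  rw [EuclideanSpace.norm_eq, Real.sqrt_le_one]
  simp only [tauC_apply, Complex.norm_real, Real.norm_eq_abs, sq_abs]
  fin_cases a <;> simp [crossProduct, Fin.sum_univ_three] at h ⊢ <;> nlinarith

/-- Lagrange's identity `|n × v|² = |n|² |v|² - |n · v̄|²` for the real unit vector `n = ξ/|ξ|`. -/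
lemma sum_norm_inner_tauC_sq {ξ : EuclideanSpace ℝ (Fin 3)} (hξ : ξ ≠ 0)
    {v : EuclideanSpace ℂ (Fin 3)} (hv : (ξ 0 : ℂ) * v 0 + ξ 1 * v 1 + ξ 2 * v 2 = 0) :
    ∑ c, ‖⟪tauC c ξ, v⟫_ℂ‖ ^ 2 = ‖v‖ ^ 2 := by
  set n : Fin 3 → ℝ := fun j => ξ j / ‖ξ‖ with hn_def
  have hunit : (n 0 : ℂ) ^ 2 + n 1 ^ 2 + n 2 ^ 2 = 1 := by
    have h := EuclideanSpace.sum_sq_div_norm ξ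
    rw [div_self (pow_ne_zero 2 (norm_ne_zero_iff.2 hξ)), Fin.sum_univ_three] at h
    exact_mod_cast h
  have horth : (n 0 : ℂ) * v 0 + n 1 * v 1 + n 2 * v 2 = 0 := by
    simp only [hn_def, Complex.ofReal_div]
    linear_combination hv / (‖ξ‖ : ℂ)
  have htau : ∀ c i, tauC c ξ i = ((crossProduct (Pi.single c (1 : ℝ)) n i : ℝ) : ℂ) :=
    fun _ _ => rfl
  clear_value n
  rw [EuclideanSpace.norm_sq_eq]
  apply Complex.ofReal_injective
  push_cast
  simp only [Fin.sum_univ_three, PiLp.inner_apply, RCLike.inner_apply, htau, Complex.conj_ofReal,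
    cross_apply, Matrix.cons_val, Pi.single_apply, ← Complex.mul_conj', map_add, map_mul]
  push_cast
  linear_combination (v 0 * conj (v 0) + v 1 * conj (v 1) + v 2 * conj (v 2)) * hunit
    - (conj (v 0) * n 0 + conj (v 1) * n 1 + conj (v 2) * n 2) * horth

theorem stmt_6_general {S : Type*}
    (a : S → Lp ℂ 2 (volume : Measure (EuclideanSpace ℝ (Fin 3))))
    (hframe : ∀ f : Lp ℂ 2 (volume : Measure (EuclideanSpace ℝ (Fin 3))),
      ‖f‖ ^ 2 = ∑' s : S, ‖(inner ℂ f (a s) : ℂ)‖ ^ 2)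
    (A : Fin 3 → S →
      Lp (EuclideanSpace ℂ (Fin 3)) 2 (volume : Measure (EuclideanSpace ℝ (Fin 3))))
    (hA : ∀ (c : Fin 3) (s : S),
      (A c s : EuclideanSpace ℝ (Fin 3) → EuclideanSpace ℂ (Fin 3)) =ᵐ[volume]
        fun ξ => a s ξ • tauC c ξ)
    (U : Lp (EuclideanSpace ℂ (Fin 3)) 2 (volume : Measure (EuclideanSpace ℝ (Fin 3))))
    (hU : ∀ᵐ ξ ∂(volume : Measure (EuclideanSpace ℝ (Fin 3))),
      (ξ 0 : ℂ) * U ξ 0 + (ξ 1 : ℂ) * U ξ 1 + (ξ 2 : ℂ) * U ξ 2 = 0) :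
    ‖U‖ ^ 2 = ∑ c : Fin 3, ∑' s : S, ‖(inner ℂ U (A c s) : ℂ)‖ ^ 2 := by
  have hG : ∀ c, MemLp (fun ξ => ⟪tauC c ξ, U ξ⟫_ℂ) 2 volume := fun c =>
    (Lp.memLp U).inner_of_norm_le_left (measurable_tauC c).aestronglyMeasurable
      (.of_forall (norm_tauC_le_one c))
  let G c := (hG c).toLp
  have hcoeff : ∀ c s, ⟪U, A c s⟫_ℂ = ⟪G c, a s⟫_ℂ := fun c s =>
    L2.inner_eq_of_ae_eq_smul (hA c s) (hG c).coeFn_toLp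
  have hnorm : ∑ c, ‖G c‖ ^ 2 = ‖U‖ ^ 2 := by
    refine L2.sum_norm_sq_eq_of_ae G U ?_
    filter_upwards [hU, Measure.ae_ne volume 0, ae_all_iff.2 fun c => (hG c).coeFn_toLp]
      with ξ hUξ hξ hGξ
    simp only [G, hGξ]
    exact sum_norm_inner_tauC_sq hξ hUξ
  simp_rw [hcoeff, ← hframe, hnorm]

/-- If `(a_s)` is a Parseval tight frame for `L²(ℝ³, ℂ)`, then the three Hedgehog copies
`A_s^a(ξ) = a_s(ξ) τ_a(ξ)` form a Parseval tight frame for the tangential fields in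
`L²(ℝ³, ℂ³)`. -/
theorem stmt_6 {S : Type*} [Countable S]
    (a : S → Lp ℂ 2 (volume : Measure (EuclideanSpace ℝ (Fin 3))))
    (hframe : ∀ f : Lp ℂ 2 (volume : Measure (EuclideanSpace ℝ (Fin 3))),
      ‖f‖ ^ 2 = ∑' s : S, ‖(inner ℂ f (a s) : ℂ)‖ ^ 2)
    (A : Fin 3 → S →
      Lp (EuclideanSpace ℂ (Fin 3)) 2 (volume : Measure (EuclideanSpace ℝ (Fin 3))))
    (hA : ∀ (c : Fin 3) (s : S),
      (A c s : EuclideanSpace ℝ (Fin 3) → EuclideanSpace ℂ (Fin 3)) =ᵐ[volume]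
        fun ξ => a s ξ • tauC c ξ)
    (U : Lp (EuclideanSpace ℂ (Fin 3)) 2 (volume : Measure (EuclideanSpace ℝ (Fin 3))))
    (hU : ∀ᵐ ξ ∂(volume : Measure (EuclideanSpace ℝ (Fin 3))),
      (ξ 0 : ℂ) * U ξ 0 + (ξ 1 : ℂ) * U ξ 1 + (ξ 2 : ℂ) * U ξ 2 = 0) :
    ‖U‖ ^ 2 = ∑ c : Fin 3, ∑' s : S, ‖(inner ℂ U (A c s) : ℂ)‖ ^ 2 :=
  stmt_6_general a hframe A hA U hU
end

section
/- Define the Portilla–Simoncelli radial window ĥ : (0, ∞) → ℝ by ĥ(r) = cos((π/2) · log₂(2r/π)) if π/4 < r ≤ π, and ĥ(r) = 0 otherwise. Then ĥ satisfies the Caldèron admissibility condition: for every r > 0, Σ_{j ∈ ℤ} ĥ(2^{−j} r)² = 1. -/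
/-!
In the logarithmic variable `s = log₂ (2r/π)` the window becomes `cos (π s / 2)` on `(-1, 1]`
and dilation by `2^{-j}` becomes translation by `-j`. Each point of the line lies in exactly two
of the translates `(j - 1, j + 1]`, at parameters differing by `1`, where the two terms of the
sum are `cos² (π s / 2)` and `cos² (π s / 2 + π / 2) = sin² (π s / 2)`.
-/

open Real

noncomputable def logWindow (s : ℝ) : ℝ :=
  if -1 < s ∧ s ≤ 1 then cos (π / 2 * s) else 0

lemma logWindow_sq_add_logWindow_add_one_sq {s : ℝ} (hs₁ : -1 < s) (hs₀ : s ≤ 0) :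
    logWindow s ^ 2 + logWindow (s + 1) ^ 2 = 1 := by
  rw [logWindow, logWindow, if_pos ⟨hs₁, by linarith⟩, if_pos ⟨by linarith, by linarith⟩,
    show π / 2 * (s + 1) = π / 2 * s + π / 2 by ring, cos_add_pi_div_two, neg_sq, add_comm]
  exact sin_sq_add_cos_sq _

lemma tsum_logWindow_sub_sq (t : ℝ) : ∑' j : ℤ, logWindow (t - j) ^ 2 = 1 := by
  set n := ⌈t⌉
  have hn₁ : t ≤ n := Int.le_ceil t
  have hn₂ : (n : ℝ) < t + 1 := Int.ceil_lt_add_one t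
  have hsupp : ∀ j ∉ ({n - 1, n} : Finset ℤ), logWindow (t - j) ^ 2 = 0 := by
    intro j hj
    simp only [Finset.mem_insert, Finset.mem_singleton, not_or] at hj
    rw [logWindow, if_neg, zero_pow two_ne_zero]
    rintro ⟨hj₁, hj₂⟩
    rcases lt_or_gt_of_ne hj.1 with hlt | hgt
    · have : (j : ℝ) ≤ n - 2 := by exact_mod_cast (by omega : j ≤ n - 2)
      linarith
    · have : (n : ℝ) + 1 ≤ j := by exact_mod_cast (by omega : n + 1 ≤ j)
      linarith
  rw [tsum_eq_sum hsupp, Finset.sum_pair (by omega), add_comm,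
    show t - ((n - 1 : ℤ) : ℝ) = t - n + 1 by push_cast; ring]
  exact logWindow_sq_add_logWindow_add_one_sq (by linarith) (by linarith)

lemma pi_div_four_lt_pi_div_two_mul_rpow_iff {s : ℝ} : π / 4 < π / 2 * 2 ^ s ↔ -1 < s :=
  calc π / 4 < π / 2 * 2 ^ s ↔ (2 : ℝ) ^ (-1 : ℝ) < 2 ^ s := by
        rw [rpow_neg_one, show π / 4 = π / 2 * 2⁻¹ by ring]
        exact mul_lt_mul_iff_right₀ pi_div_two_pos
    _ ↔ -1 < s := rpow_lt_rpow_left_iff one_lt_two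

lemma pi_div_two_mul_rpow_le_pi_iff {s : ℝ} : π / 2 * 2 ^ s ≤ π ↔ s ≤ 1 :=
  calc π / 2 * 2 ^ s ≤ π ↔ (2 : ℝ) ^ s ≤ 2 ^ (1 : ℝ) := by
        rw [rpow_one, ← mul_le_mul_iff_right₀ (b := (2 : ℝ) ^ s) (c := 2) pi_div_two_pos,
          div_mul_cancel₀ _ two_ne_zero]
    _ ↔ s ≤ 1 := rpow_le_rpow_left_iff one_lt_two

lemma eq_logWindow_of_forall_eq_ite {h : ℝ → ℝ}
    (hh : ∀ r : ℝ, 0 < r →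
      h r = if π / 4 < r ∧ r ≤ π then cos (π / 2 * logb 2 (2 * r / π)) else 0)
    (s : ℝ) : h (π / 2 * 2 ^ s) = logWindow s := by
  have hlog : logb 2 (2 * (π / 2 * 2 ^ s) / π) = s := by
    rw [show 2 * (π / 2 * (2 : ℝ) ^ s) / π = 2 ^ s by field_simp]
    exact logb_rpow two_pos (by norm_num)
  simp only [hh _ (by positivity : (0 : ℝ) < π / 2 * 2 ^ s), hlog,
    pi_div_four_lt_pi_div_two_mul_rpow_iff, pi_div_two_mul_rpow_le_pi_iff, logWindow]

/-- The Portilla–Simoncelli radial window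
`ĥ(r) = cos((π/2) log₂(2r/π))` for `π/4 < r ≤ π` and `0` otherwise satisfies the
Caldèron admissibility condition `∑_{j ∈ ℤ} ĥ(2^{-j} r)² = 1` for every `r > 0`. -/
theorem stmt_9 (h : ℝ → ℝ)
    (hh : ∀ r : ℝ, 0 < r →
      h r = if Real.pi / 4 < r ∧ r ≤ Real.pi
        then Real.cos (Real.pi / 2 * Real.logb 2 (2 * r / Real.pi)) else 0)
    (r : ℝ) (hr : 0 < r) :
    ∑' j : ℤ, h ((2 : ℝ) ^ (-j) * r) ^ 2 = 1 := by
  set t := logb 2 (2 * r / π)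
  have hr_eq : r = π / 2 * 2 ^ t := by
    rw [rpow_logb two_pos (by norm_num) (by positivity)]
    field_simp
  have hdilate : ∀ j : ℤ, (2 : ℝ) ^ (-j) * r = π / 2 * 2 ^ (t - j) := by
    intro j
    rw [hr_eq, sub_eq_neg_add, rpow_add two_pos, ← Int.cast_neg, rpow_intCast]
    ring
  simp_rw [hdilate, eq_logWindow_of_forall_eq_ite hh]
  exact tsum_logWindow_sub_sq t
end
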